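/- arXiv:2605.11850 — 4 statements merged into one kernel-verified Lean document; each statement's English description precedes it below -/
import Mathlib

section
/- Suppose h : ℝ → (-∞,∞] satisfies Assumption (SC) with parameter μ > 0. Then the spectral isotropic function Φ_iso : ℝ^{m×n} → (-∞,∞], Φ_iso(X) = h(‖σ(X)‖₂) = h(‖X‖_F), satisfies Assumption (SC), and its conjugate satisfies ∇Φ_iso*(Y) = (h*)'(‖Y‖_F) · Y/‖Y‖_F for Y ≠ 0. -/
open Filter Topology Set Matrix
open scoped RealInnerProductSpace

noncomputable section

/-- Frobenius norm and inner product on real rectangular matrices, obtained from the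
`L²`-product structure (this is the Frobenius inner product `⟨A,B⟩ = tr(AᵀB)`). -/
noncomputable def matLpEquiv {m n : ℕ} :
    Matrix (Fin m) (Fin n) ℝ ≃ₗ[ℝ] (PiLp 2 fun _ : Fin m => PiLp 2 fun _ : Fin n => ℝ) :=
  (LinearEquiv.piCongrRight (fun _ : Fin m => (WithLp.linearEquiv 2 ℝ (Fin n → ℝ)).symm)).trans
    (WithLp.linearEquiv 2 ℝ (Fin m → PiLp 2 fun _ : Fin n => ℝ)).symm

noncomputable instance matNACG {m n : ℕ} : NormedAddCommGroup (Matrix (Fin m) (Fin n) ℝ) :=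
  NormedAddCommGroup.induced _ _ (matLpEquiv (m := m) (n := n)) matLpEquiv.injective

noncomputable instance matIPS {m n : ℕ} : InnerProductSpace ℝ (Matrix (Fin m) (Fin n) ℝ) :=
  InnerProductSpace.induced (matLpEquiv (m := m) (n := n))

instance matFD {m n : ℕ} : FiniteDimensional ℝ (Matrix (Fin m) (Fin n) ℝ) :=
  inferInstance

/-- Effective domain of an extended-real-valued function. -/
def edom {α : Type*} (φ : α → EReal) : Set α := {x | φ x ≠ ⊤}

/-- Epi-scaling `(γ ⋆ φ)(x) = γ φ(x/γ)` (for `γ > 0`). -/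
noncomputable def escale {α : Type*} [SMul ℝ α] (γ : ℝ) (φ : α → EReal) (x : α) : EReal :=
  (γ : EReal) * φ (γ⁻¹ • x)

variable {E : Type*} [NormedAddCommGroup E] [InnerProductSpace ℝ E] [FiniteDimensional ℝ E]

/-- Convex conjugate of an extended-real-valued function on a Euclidean space. -/
noncomputable def econj (φ : E → EReal) (y : E) : EReal :=
  ⨆ x : E, ((⟪y, x⟫ : ℝ) : EReal) - φ x

/-- Assumption (SC). -/
structure SC (φ : E → EReal) (μ : ℝ) : Prop where
  proper : ∃ x, φ x ≠ ⊤
  nobot : ∀ x, φ x ≠ ⊥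
  lsc : LowerSemicontinuous φ
  strconv : ∀ x y : E, ∀ t : ℝ, 0 ≤ t → t ≤ 1 →
    φ (t • x + (1 - t) • y) ≤ (t : EReal) * φ x + ((1 - t : ℝ) : EReal) * φ y
      - (((μ / 2) * (t * (1 - t)) * ‖x - y‖ ^ 2 : ℝ) : EReal)
  even : ∀ x, φ (-x) = φ x
  nonneg : ∀ x, 0 ≤ φ x
  zero : φ 0 = 0
  int_nonempty : (interior (edom φ)).Nonempty
  smooth : ∃ G : E → E,
    (∀ x ∈ interior (edom φ), HasGradientAt (fun z => (φ z).toReal) (G x) x) ∧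
    ContinuousOn G (interior (edom φ)) ∧
    ∀ (xs : ℕ → E) (b : E), (∀ k, xs k ∈ interior (edom φ)) →
      b ∈ frontier (edom φ) → Tendsto xs atTop (𝓝 b) →
      Tendsto (fun k => ‖G (xs k)‖) atTop atTop

/-- `∇φ*`, the (nonlinear) preconditioner. -/
noncomputable def gradConj (φ : E → EReal) (y : E) : E :=
  gradient (fun x => (econj φ x).toReal) y

/-- Real-valued version of `φ*` (finite under Assumption (SC)). -/
noncomputable def realConj (φ : E → EReal) (y : E) : ℝ := (econj φ y).toReal

/-- The vector of singular values of a rectangular real matrix, in nonincreasing order. -/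
noncomputable def svals {m n : ℕ} (A : Matrix (Fin m) (Fin n) ℝ) : Fin (min m n) → ℝ :=
  fun i =>
    let ev : Fin n → ℝ := (Matrix.isHermitian_conjTranspose_mul_self A).eigenvalues
    Real.sqrt (ev (Tuple.sort ev ((Fin.castLE (min_le_right m n) i).rev)))

/-- The `m × n` "diagonal" matrix with vector `x` on its main diagonal. -/
def diagRect {m n : ℕ} (x : Fin (min m n) → ℝ) : Matrix (Fin m) (Fin n) ℝ :=
  fun i j => if h : (i : ℕ) = (j : ℕ) ∧ (i : ℕ) < min m n then x ⟨i, h.2⟩ else 0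

/-- A real square matrix is orthogonal. -/
def IsOrth {k : ℕ} (U : Matrix (Fin k) (Fin k) ℝ) : Prop :=
  Uᵀ * U = 1 ∧ U * Uᵀ = 1

/-- `|x|^↓`: absolute values of the entries of `x`, rearranged in nonincreasing order. -/
noncomputable def absSortDesc {q : ℕ} (x : Fin q → ℝ) : Fin q → ℝ :=
  fun i => |x (Tuple.sort (fun j => |x j|) i.rev)|

/-- `f` is absolutely symmetric if `f x = f (|x|^↓)` for all `x`. -/
def AbsolutelySymmetric {q : ℕ} (f : (Fin q → ℝ) → EReal) : Prop :=
  ∀ x, f x = f (absSortDesc x)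

section Aux

lemma inner_real_mul (a b : ℝ) : ⟪a, b⟫ = a * b := by
  simp [RCLike.inner_apply, starRingEnd_apply, mul_comm]

variable {h : ℝ → EReal} {μ : ℝ}

lemma SC.coeH (hSC : SC h μ) {t : ℝ} (ht : t ∈ edom h) :
    h t = (((h t).toReal : ℝ) : EReal) :=
  (EReal.coe_toReal ht (hSC.nobot t)).symm

lemma SC.realSC (hSC : SC h μ) {a b t : ℝ} (ha : a ∈ edom h) (hb : b ∈ edom h)
    (ht0 : 0 ≤ t) (ht1 : t ≤ 1) :
    (t*a+(1-t)*b) ∈ edom h ∧ (h (t*a+(1-t)*b)).toReal ≤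
      t*(h a).toReal + (1-t)*(h b).toReal - μ/2*(t*(1-t))*(a-b)^2 := by
  have key := hSC.strconv a b t ht0 ht1
  rw [smul_eq_mul, smul_eq_mul, hSC.coeH ha, hSC.coeH hb] at key
  rw [show ((t:EReal) * (((h a).toReal : ℝ) : EReal) + ((1-t : ℝ):EReal) * (((h b).toReal : ℝ):EReal)
      - ((μ / 2 * (t * (1 - t)) * ‖a - b‖ ^ 2 : ℝ) : EReal))
      = ((t*(h a).toReal + (1-t)*(h b).toReal - μ/2*(t*(1-t))*(a-b)^2 : ℝ) : EReal) by
        rw [← EReal.coe_mul, ← EReal.coe_mul, ← EReal.coe_add, ← EReal.coe_sub]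
        norm_num [Real.norm_eq_abs, sq_abs]] at key
  have hne : h (t*a+(1-t)*b) ≠ ⊤ := ne_top_of_le_ne_top (EReal.coe_ne_top _) key
  refine ⟨hne, ?_⟩
  have := EReal.toReal_le_toReal key (hSC.nobot _) (EReal.coe_ne_top _)
  rwa [EReal.toReal_coe] at this

lemma SC.neg_mem (hSC : SC h μ) {a : ℝ} (ha : a ∈ edom h) : -a ∈ edom h := by
  simpa [edom, hSC.even] using ha

lemma SC.interval_mem (hSC : SC h μ) {a u : ℝ} (ha : a ∈ edom h) (hu : |u| ≤ |a|) :
    u ∈ edom h := by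
  rcases eq_or_ne a 0 with rfl | hane
  · simp only [abs_zero, abs_nonpos_iff] at hu; subst hu; exact ha
  · set r := u / a with hr
    have hrabs : |r| ≤ 1 := by
      rw [hr, abs_div, div_le_one (abs_pos.2 hane)]; exact hu
    have h1 := abs_le.1 hrabs
    have := (hSC.realSC ha (hSC.neg_mem ha) (t := (r+1)/2)
      (by linarith [h1.1]) (by linarith [h1.2])).1
    have heq : (r+1)/2*a+(1-(r+1)/2)*(-a) = u := by
      field_simp [hr]
      rw [hr]; field_simp; ring
    rwa [heq] at this

lemma SC.H_even (hSC : SC h μ) (t : ℝ) : (h (-t)).toReal = (h t).toReal := by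
  rw [hSC.even]

lemma SC.H_zero (hSC : SC h μ) : (h 0).toReal = 0 := by rw [hSC.zero]; rfl

lemma SC.quad_le (hSC : SC h μ) (t : ℝ) : ((μ/2*t^2 : ℝ) : EReal) ≤ h t := by
  by_cases ht : t ∈ edom h
  · have h2 := (hSC.realSC ht (hSC.neg_mem ht) (t := 1/2) (by norm_num) (by norm_num)).2
    have heq : (1:ℝ)/2*t + (1-1/2)*(-t) = 0 := by ring
    rw [heq, hSC.H_zero, hSC.H_even] at h2
    rw [hSC.coeH ht, EReal.coe_le_coe_iff]
    nlinarith [h2]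
  · have : h t = ⊤ := not_not.1 ht
    rw [this]; exact le_top

lemma SC.edom_convex (hSC : SC h μ) : Convex ℝ (edom h) := by
  intro x hx y hy s t hs ht hst
  have := (hSC.realSC hx hy (t := s) hs (by linarith)).1
  have hteq : t = 1 - s := by linarith
  simpa [smul_eq_mul, hteq] using this

lemma SC.zero_mem_int (hSC : SC h μ) : (0:ℝ) ∈ interior (edom h) := by
  obtain ⟨p, hp⟩ := hSC.int_nonempty
  have hpre : (fun x : ℝ => -x) ⁻¹' edom h = edom h := by
    ext x; simp only [Set.mem_preimage, edom, Set.mem_setOf_eq, hSC.even]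
  have hnp : -p ∈ interior (edom h) := by
    have := (Homeomorph.neg ℝ).preimage_interior (edom h)
    rw [show ⇑(Homeomorph.neg ℝ) = (fun x : ℝ => -x) from rfl, hpre] at this
    have hmem : -p ∈ (fun x : ℝ => -x) ⁻¹' interior (edom h) := by simpa using hp
    rwa [this] at hmem
  have hc := hSC.edom_convex.interior
  have := hc hp hnp (by norm_num : (0:ℝ) ≤ 1/2) (by norm_num : (0:ℝ) ≤ 1/2) (by norm_num)
  simpa using this

end Aux
section Aux2

variable {h : ℝ → EReal} {μ : ℝ}

/-- convexity of `H - (μ/2) t²` on the domain.  -/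
lemma SC.g_convex (hSC : SC h μ) {a b t : ℝ} (ha : a ∈ edom h) (hb : b ∈ edom h)
    (ht0 : 0 ≤ t) (ht1 : t ≤ 1) :
    (h (t*a+(1-t)*b)).toReal - μ/2*(t*a+(1-t)*b)^2 ≤
      t*((h a).toReal - μ/2*a^2) + (1-t)*((h b).toReal - μ/2*b^2) := by
  have := (hSC.realSC ha hb ht0 ht1).2
  nlinarith [this]

lemma SC.g_mono (hSC : SC h μ) {u v : ℝ} (hu0 : 0 ≤ u) (huv : u ≤ v) (hv : v ∈ edom h) :
    (h u).toReal - μ/2*u^2 ≤ (h v).toReal - μ/2*v^2 := by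
  rcases eq_or_lt_of_le (hu0.trans huv) with rfl | hvpos
  · have : u = 0 := le_antisymm huv hu0
    simp [this]
  · set t := (u/v+1)/2 with htdef
    have hr0 : 0 ≤ u/v := div_nonneg hu0 hvpos.le
    have hr1 : u/v ≤ 1 := (div_le_one hvpos).2 huv
    have hgc := hSC.g_convex hv (hSC.neg_mem hv) (t := t)
      (by rw [htdef]; linarith) (by rw [htdef]; linarith)
    have heq : t*v+(1-t)*(-v) = u := by
      rw [htdef]; field_simp; ring
    rw [heq, hSC.even] at hgc
    nlinarith [hgc]

/-- the key real inequality for strong convexity of `h ∘ ‖·‖`. -/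
lemma SC.key_ineq (hSC : SC h μ) {a b s c t : ℝ} (ha : a ∈ edom h) (hb : b ∈ edom h)
    (ha0 : 0 ≤ a) (hb0 : 0 ≤ b) (hs0 : 0 ≤ s) (ht0 : 0 ≤ t) (ht1 : t ≤ 1)
    (hsle : s ≤ t*a+(1-t)*b) (hs2 : s^2 = t*a^2+(1-t)*b^2 - (t*(1-t))*c^2) :
    s ∈ edom h ∧ (h s).toReal ≤
      t*(h a).toReal + (1-t)*(h b).toReal - μ/2*(t*(1-t))*c^2 := by
  set w := t*a+(1-t)*b with hw
  have hwmem : w ∈ edom h := (hSC.realSC ha hb ht0 ht1).1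
  have hw0 : 0 ≤ w :=
    add_nonneg (mul_nonneg ht0 ha0) (mul_nonneg (by linarith) hb0)
  have hsmem : s ∈ edom h := hSC.interval_mem hwmem (by rw [abs_of_nonneg hs0, abs_of_nonneg hw0]; exact hsle)
  refine ⟨hsmem, ?_⟩
  have h1 := hSC.g_mono hs0 hsle hwmem
  have h2 := hSC.g_convex ha hb ht0 ht1
  rw [← hw] at h2
  have h3 : μ/2*s^2 - μ/2*(t*a^2+(1-t)*b^2) = - (μ/2*(t*(1-t))*c^2) := by
    linear_combination (μ/2) * hs2
  nlinarith [h1, h2, h3]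

/-- a lower semicontinuous `EReal`-valued function attains its minimum on a compact set. -/
lemma lsc_min_on_compact {K : Set ℝ} (hK : IsCompact K) (hne : K.Nonempty)
    {ψ : ℝ → EReal} (hψ : LowerSemicontinuous ψ) : ∃ x ∈ K, ∀ y ∈ K, ψ x ≤ ψ y := by
  set c := sInf (ψ '' K) with hc
  by_cases hctop : c = ⊤
  · obtain ⟨x, hx⟩ := hne
    refine ⟨x, hx, fun y hy => ?_⟩
    have : ψ y = ⊤ := top_le_iff.1 (hctop ▸ sInf_le ⟨y, hy, rfl⟩ : (⊤:EReal) ≤ ψ y)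
    simp [this]
  · have hclt : c < ⊤ := lt_top_iff_ne_top.2 hctop
    have hNe : Nonempty (Set.Ioi c) := ⟨⟨⊤, hclt⟩⟩
    set S : Set.Ioi c → Set ℝ := fun b => K ∩ {t | ψ t ≤ b.1} with hS
    have hclosed : ∀ b, IsClosed (S b) := by
      intro b
      exact hK.isClosed.inter (lowerSemicontinuous_iff_isClosed_preimage.1 hψ b.1)
    have hcompact : ∀ b, IsCompact (S b) :=
      fun b => hK.of_isClosed_subset (hclosed b) (Set.inter_subset_left)
    have hnonempty : ∀ b, (S b).Nonempty := by
      rintro ⟨b, hb⟩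
      obtain ⟨v, ⟨t, ht, rfl⟩, hvb⟩ := sInf_lt_iff.1 (show c < b from hb)
      exact ⟨t, ht, le_of_lt hvb⟩
    have hdir : Directed (· ⊇ ·) S := by
      rintro ⟨b1, hb1⟩ ⟨b2, hb2⟩
      refine ⟨⟨min b1 b2, Set.mem_Ioi.2 (lt_min hb1 hb2)⟩, ?_, ?_⟩
      · intro x hx
        have hx2 : ψ x ≤ min b1 b2 := hx.2
        exact ⟨hx.1, Set.mem_setOf.mpr (hx2.trans (min_le_left _ _))⟩
      · intro x hx
        have hx2 : ψ x ≤ min b1 b2 := hx.2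
        exact ⟨hx.1, Set.mem_setOf.mpr (hx2.trans (min_le_right _ _))⟩
    obtain ⟨x, hx⟩ := IsCompact.nonempty_iInter_of_directed_nonempty_isCompact_isClosed
      S hdir hnonempty hcompact hclosed
    simp only [Set.mem_iInter] at hx
    have hxK : x ∈ K := (hx ⟨⊤, hclt⟩).1
    refine ⟨x, hxK, fun y hy => ?_⟩
    have hxc : ψ x ≤ c := by
      apply le_of_forall_gt_imp_ge_of_dense
      intro b hb
      exact (hx ⟨b, hb⟩).2
    exact hxc.trans (sInf_le ⟨y, hy, rfl⟩)

lemma SC.exists_max (hSC : SC h μ) (hμ : 0 < μ) (s : ℝ) :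
    ∃ x : ℝ, x ∈ edom h ∧
      (∀ t : ℝ, ((s*t : ℝ) : EReal) - h t ≤ ((s*x - (h x).toReal : ℝ) : EReal)) ∧
      econj h s = ((s*x - (h x).toReal : ℝ) : EReal) := by
  set ψ : ℝ → EReal := fun t => h t + (((-s)*t : ℝ) : EReal) with hψdef
  have hψlsc : LowerSemicontinuous ψ := by
    apply hSC.lsc.add' (Continuous.lowerSemicontinuous
      (EReal.continuous_coe_iff.2 (by continuity)))
    intro x
    apply EReal.continuousAt_add
    · right; exact EReal.coe_ne_bot _
    · left; exact hSC.nobot x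
  set M : ℝ := 2*(|s|+1)/μ with hM
  have hM0 : 0 ≤ M := by positivity
  have h0K : (0:ℝ) ∈ Set.Icc (-M) M := Set.mem_Icc.2 ⟨by linarith, hM0⟩
  obtain ⟨x, hxK, hxmin⟩ := lsc_min_on_compact (isCompact_Icc (a := -M) (b := M))
    ⟨0, h0K⟩ hψlsc
  have hψ0 : ψ 0 = 0 := by simp [hψdef, hSC.zero]
  have hψx0 : ψ x ≤ 0 := hψ0 ▸ hxmin 0 h0K
  have hxdom : x ∈ edom h := by
    simp only [edom, Set.mem_setOf_eq]
    intro htop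
    have hψtop : ψ x = ⊤ := by
      rw [hψdef]; simp only
      rw [htop, EReal.top_add_of_ne_bot (EReal.coe_ne_bot _)]
    rw [hψtop] at hψx0
    exact absurd hψx0 (by simp)
  -- real minimality on edom ∩ K
  have hψreal : ∀ t : ℝ, t ∈ edom h → ψ t = (((h t).toReal + (-s)*t : ℝ) : EReal) := by
    intro t ht
    rw [hψdef]
    simp only
    nth_rewrite 1 [hSC.coeH ht]
    rw [← EReal.coe_add]
  have hreal_min : ∀ t ∈ Set.Icc (-M) M, t ∈ edom h →
      (h x).toReal + (-s)*x ≤ (h t).toReal + (-s)*t := by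
    intro t htK htd
    have := hxmin t htK
    rw [hψreal x hxdom, hψreal t htd, EReal.coe_le_coe_iff] at this
    exact this
  have hx_sign : 0 ≤ s*x - (h x).toReal := by
    have := hreal_min 0 h0K (by simp [edom, hSC.zero])
    rw [hSC.H_zero] at this
    linarith
  have hub : ∀ t : ℝ, ((s*t : ℝ) : EReal) - h t ≤ ((s*x - (h x).toReal : ℝ) : EReal) := by
    intro t
    by_cases htd : t ∈ edom h
    · by_cases htK : t ∈ Set.Icc (-M) M
      · have := hreal_min t htK htd
        rw [hSC.coeH htd, ← EReal.coe_sub, EReal.coe_le_coe_iff]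
        linarith
      · have habs : M < |t| := by
          by_contra hcon
          push_neg at hcon
          exact htK (abs_le.1 hcon)
        have hq := hSC.quad_le t
        rw [hSC.coeH htd, EReal.coe_le_coe_iff] at hq
        have hquad2 : s*t < μ/2*t^2 := by
          have h2 : (0:ℝ) < |t| := lt_of_le_of_lt hM0 habs
          have hMt : μ/2 * (M * |t|) = (|s| + 1) * |t| := by
            rw [hM]; field_simp
          have h4 : μ/2*(|t| * |t|) > μ/2*(M * |t|) :=
            mul_lt_mul_of_pos_left (mul_lt_mul_of_pos_right habs h2) (by positivity)
          have h5 : s*t ≤ |s| * |t| := (le_abs_self _).trans (le_of_eq (abs_mul s t))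
          have h6 : μ/2*t^2 = μ/2*(|t| * |t|) := by rw [abs_mul_abs_self]; ring_nf
          nlinarith [h4, h5, h6, hMt, h2]
        rw [hSC.coeH htd, ← EReal.coe_sub, EReal.coe_le_coe_iff]
        linarith
    · have : h t = ⊤ := not_not.1 htd
      rw [this, EReal.sub_top]
      exact bot_le
  refine ⟨x, hxdom, hub, ?_⟩
  apply le_antisymm
  · apply iSup_le
    intro t
    rw [inner_real_mul]
    exact hub t
  · apply le_iSup_of_le x
    have : ((s*x - (h x).toReal : ℝ) : EReal)
        = ((s*x:ℝ):EReal) - (((h x).toReal : ℝ) : EReal) := by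
      rw [← EReal.coe_sub]
    rw [this, ← hSC.coeH hxdom, inner_real_mul]

end Aux2
section Aux3

variable {h : ℝ → EReal} {μ : ℝ}

lemma SC.differentiableAt_realConj (hSC : SC h μ) (hμ : 0 < μ) (s : ℝ) :
    DifferentiableAt ℝ (fun t : ℝ => realConj h t) s := by
  choose x hdom hub hval using fun s' : ℝ => hSC.exists_max hμ s'
  have hfval : ∀ s' : ℝ, realConj h s' = s'*(x s') - (h (x s')).toReal := by
    intro s'
    rw [realConj, hval s', EReal.toReal_coe]
  have hmaxreal : ∀ s' u : ℝ, u ∈ edom h →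
      s'*u - (h u).toReal ≤ s'*(x s') - (h (x s')).toReal := by
    intro s' u hu
    have := hub s' u
    rwa [hSC.coeH hu, ← EReal.coe_sub, EReal.coe_le_coe_iff] at this
  have hconc : ∀ s' t : ℝ, t ∈ edom h →
      s'*t - (h t).toReal ≤ s'*(x s') - (h (x s')).toReal - μ/2*(t - x s')^2 := by
    intro s' t ht
    set z := x s' with hz
    have hzd : z ∈ edom h := hdom s'
    set A := s'*t - (h t).toReal with hA
    set B := μ/2*(t - z)^2 with hB
    have key : ∀ l : ℝ, 0 < l → l ≤ 1 → A + B*(1-l) ≤ s'*z - (h z).toReal := by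
      intro l hl0 hl1
      obtain ⟨hmem, hineq⟩ := hSC.realSC ht hzd hl0.le hl1
      have h2 := hmaxreal s' _ hmem
      have h3 : l*(A + B*(1-l)) ≤ l*(s'*z - (h z).toReal) := by
        rw [hA, hB]
        nlinarith [hineq, h2]
      exact le_of_mul_le_mul_left h3 hl0
    have t1 : Filter.Tendsto (fun k : ℕ => 1/((k:ℝ)+1)) Filter.atTop (𝓝 0) :=
      tendsto_one_div_add_atTop_nhds_zero_nat
    have hlim : Filter.Tendsto (fun k : ℕ => A + B*(1-1/((k:ℝ)+1))) Filter.atTop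
        (𝓝 (A + B*(1-0))) :=
      tendsto_const_nhds.add ((tendsto_const_nhds.sub t1).const_mul B)
    have hfin : A + B*(1-0) ≤ s'*z - (h z).toReal := by
      apply le_of_tendsto' hlim
      intro k
      apply key
      · positivity
      · rw [div_le_one (by positivity)]
        simp
    rw [hA, hB] at hfin
    nlinarith [hfin]
  have hE : ∀ s' : ℝ, 0 ≤ realConj h s' - realConj h s - (s'-s)*(x s) ∧
      realConj h s' - realConj h s - (s'-s)*(x s) ≤ (s'-s)^2/(2*μ) := by
    intro s'
    have hlow := hmaxreal s' (x s) (hdom s)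
    have hup := hconc s (x s') (hdom s')
    rw [hfval s', hfval s]
    constructor
    · linarith
    · have h2μ : (0:ℝ) < 2*μ := by linarith
      have hsq : (s'-s)*((x s') - x s) - μ/2*((x s') - x s)^2 ≤ (s'-s)^2/(2*μ) := by
        rw [le_div_iff₀ h2μ]
        nlinarith [sq_nonneg (μ*((x s') - x s) - (s'-s))]
      nlinarith [hup, hsq]
  have hd : HasDerivAt (fun t : ℝ => realConj h t) (x s) s := by
    rw [hasDerivAt_iff_isLittleO]
    have h1 : (fun s' => realConj h s' - realConj h s - (s'-s)*(x s))
        =O[𝓝 s] (fun s' => (s'-s)^2) := by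
      rw [Asymptotics.isBigO_iff]
      refine ⟨1/(2*μ), Filter.Eventually.of_forall fun s' => ?_⟩
      obtain ⟨hl, hu⟩ := hE s'
      rw [Real.norm_eq_abs, Real.norm_eq_abs, abs_of_nonneg hl, abs_of_nonneg (sq_nonneg _)]
      calc realConj h s' - realConj h s - (s'-s)*(x s) ≤ (s'-s)^2/(2*μ) := hu
      _ = 1/(2*μ) * (s'-s)^2 := by ring
    have h2 : (fun s' : ℝ => (s'-s)^2) =o[𝓝 s] (fun s' => s'-s) := by
      rw [Asymptotics.isLittleO_iff]
      intro c hc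
      filter_upwards [eventually_abs_sub_lt s hc] with s' hs'
      rw [Real.norm_eq_abs, Real.norm_eq_abs, abs_of_nonneg (sq_nonneg _), sq]
      calc (s'-s) * (s'-s) ≤ |s'-s| * |s'-s| := by
            rw [← abs_mul]; exact le_abs_self _
      _ ≤ c * |s'-s| := mul_le_mul_of_nonneg_right hs'.le (abs_nonneg _)
    have := h1.trans_isLittleO h2
    simpa [smul_eq_mul, mul_comm] using this
  exact hd.differentiableAt

end Aux3
section Aux4

variable {h : ℝ → EReal} {μ : ℝ}
variable {F : Type*} [NormedAddCommGroup F] [InnerProductSpace ℝ F] [FiniteDimensional ℝ F]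

/-- chain rule : gradient of `f ∘ ‖·‖` away from the origin. -/
lemma hasGradientAt_comp_norm {f : ℝ → ℝ} {d : ℝ} {Y : F} (hY : Y ≠ 0)
    (hf : HasDerivAt f d ‖Y‖) :
    HasGradientAt (fun Z : F => f ‖Z‖) ((d / ‖Y‖) • Y) Y := by
  have hn0 : (0:ℝ) < ‖Y‖ := norm_pos_iff.2 hY
  have hsq : HasFDerivAt (fun Z : F => ‖Z‖^2) (2 • (innerSL ℝ Y)) Y :=
    (hasStrictFDerivAt_norm_sq Y).hasFDerivAt
  have hsqrt : HasDerivAt Real.sqrt (1/(2*Real.sqrt (‖Y‖^2))) (‖Y‖^2) :=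
    Real.hasDerivAt_sqrt (by positivity)
  have hfY : HasDerivAt f d (Real.sqrt (‖Y‖^2)) := by
    rwa [Real.sqrt_sq (norm_nonneg Y)]
  have hcomp1 : HasDerivAt (fun r => f (Real.sqrt r)) (d * (1/(2*Real.sqrt (‖Y‖^2)))) (‖Y‖^2) :=
    hfY.comp _ hsqrt
  have hcomp2 : HasFDerivAt (fun Z : F => f (Real.sqrt (‖Z‖^2)))
      ((d * (1/(2*Real.sqrt (‖Y‖^2)))) • (2 • (innerSL ℝ Y))) Y :=
    hcomp1.comp_hasFDerivAt (f := fun Z : F => ‖Z‖^2) Y hsq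
  have hfun : (fun Z : F => f (Real.sqrt (‖Z‖^2))) = fun Z : F => f ‖Z‖ := by
    funext Z; rw [Real.sqrt_sq (norm_nonneg Z)]
  rw [hfun] at hcomp2
  rw [hasGradientAt_iff_hasFDerivAt]
  refine hcomp2.congr_fderiv ?_
  ext z
  simp only [InnerProductSpace.toDual_apply_apply, ContinuousLinearMap.smul_apply,
    ContinuousLinearMap.smul_apply, innerSL_apply_apply, smul_eq_mul]
  rw [real_inner_smul_left, Real.sqrt_sq (norm_nonneg Y)]
  field_simp
  ring
/-- gradient of `f ∘ ‖·‖` at the origin when `f'(0) = 0`. -/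
lemma hasGradientAt_comp_norm_zero {f : ℝ → ℝ} (hf : HasDerivAt f 0 0) :
    HasGradientAt (fun Z : F => f ‖Z‖) 0 0 := by
  rw [hasGradientAt_iff_isLittleO]
  have h1 : (fun t : ℝ => f t - f 0) =o[𝓝 0] (fun t : ℝ => t) := by
    have := hasDerivAt_iff_isLittleO.1 hf
    simpa using this
  have h2 : Filter.Tendsto (fun Z : F => ‖Z‖) (𝓝 0) (𝓝 0) := by
    have := continuous_norm.tendsto (0:F)
    rwa [norm_zero] at this
  have h3 : (fun Z : F => f ‖Z‖ - f 0) =o[𝓝 0] (fun Z : F => ‖Z‖) := h1.comp_tendsto h2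
  have h4 : (fun Z : F => ‖Z‖) =O[𝓝 (0:F)] (fun Z : F => Z) :=
    Asymptotics.isBigO_norm_left.mpr (Asymptotics.isBigO_refl _ _)
  have h5 := h3.trans_isBigO h4
  simpa using h5

/-- interior of the domain of `h ∘ ‖·‖`. -/
lemma SC.mem_int_edom_iff (hSC : SC h μ) {X : F} :
    X ∈ interior (edom (fun Z : F => h ‖Z‖)) ↔ ‖X‖ ∈ interior (edom h) := by
  constructor
  · intro hX
    rcases eq_or_ne X 0 with rfl | hX0
    · rw [norm_zero]; exact hSC.zero_mem_int
    · have hXpos : (0:ℝ) < ‖X‖ := norm_pos_iff.2 hX0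
      obtain ⟨ε, hε, hball⟩ := Metric.isOpen_iff.1 isOpen_interior X hX
      have hsub : Metric.ball X ε ⊆ edom (fun Z : F => h ‖Z‖) :=
        hball.trans interior_subset
      have hXd : ‖X‖ ∈ edom h := hsub (Metric.mem_ball_self hε)
      have hIoo : Set.Ioo (‖X‖ - ε) (‖X‖ + ε) ⊆ edom h := by
        intro t ⟨htl, htr⟩
        by_cases habs : |t| ≤ ‖X‖
        · exact hSC.interval_mem hXd (by rwa [abs_of_nonneg (norm_nonneg X)])
        · push_neg at habs
          have habs2 : |t| - ‖X‖ < ε := by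
            rcases abs_cases t with ⟨he, _⟩ | ⟨he, _⟩ <;> rw [he] <;>
              linarith [norm_nonneg X]
          set Z : F := (|t|/‖X‖) • X with hZ
          have hZnorm : ‖Z‖ = |t| := by
            rw [hZ, norm_smul, Real.norm_eq_abs, abs_div, abs_abs, abs_of_nonneg (norm_nonneg X),
              div_mul_cancel₀ _ hXpos.ne']
          have hZball : Z ∈ Metric.ball X ε := by
            rw [Metric.mem_ball, dist_eq_norm, hZ]
            have : (|t|/‖X‖) • X - X = ((|t|/‖X‖ - 1)) • X := by
              rw [sub_smul, one_smul]
            have hfac : (0:ℝ) ≤ |t|/‖X‖ - 1 := by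
              rw [le_sub_iff_add_le, zero_add, le_div_iff₀ hXpos, one_mul]
              exact habs.le
            rw [this, norm_smul, Real.norm_eq_abs, abs_of_nonneg hfac]
            calc (|t|/‖X‖ - 1) * ‖X‖ = |t| - ‖X‖ := by field_simp
            _ < ε := habs2
          have habsdom : |t| ∈ edom h := by
            have h7 : h ‖Z‖ ≠ ⊤ := hsub hZball
            rw [hZnorm] at h7
            exact h7
          exact hSC.interval_mem habsdom (by rw [abs_abs])
      have : Metric.ball ‖X‖ ε ⊆ edom h := by
        intro t ht
        rw [Metric.mem_ball, Real.dist_eq, abs_lt] at ht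
        exact hIoo ⟨by linarith [ht.1], by linarith [ht.2]⟩
      exact mem_interior.2 ⟨Metric.ball ‖X‖ ε, this, Metric.isOpen_ball, Metric.mem_ball_self hε⟩
  · intro hX
    obtain ⟨ε, hε, hball⟩ := Metric.isOpen_iff.1 isOpen_interior ‖X‖ hX
    have hsub : Metric.ball ‖X‖ ε ⊆ edom h := hball.trans interior_subset
    have : Metric.ball X ε ⊆ edom (fun Z : F => h ‖Z‖) := by
      intro Z hZ
      have : ‖Z‖ ∈ Metric.ball ‖X‖ ε := by
        rw [Metric.mem_ball, Real.dist_eq]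
        calc |‖Z‖ - ‖X‖| ≤ ‖Z - X‖ := abs_norm_sub_norm_le Z X
        _ < ε := by rwa [Metric.mem_ball, dist_eq_norm] at hZ
      exact hsub this
    exact mem_interior.2 ⟨Metric.ball X ε, this, Metric.isOpen_ball, Metric.mem_ball_self hε⟩

end Aux4
section Aux5

variable {h : ℝ → EReal} {μ : ℝ}
variable {F : Type*} [NormedAddCommGroup F] [InnerProductSpace ℝ F] [FiniteDimensional ℝ F]

lemma ereal_nonneg_ne_bot {x : EReal} (hx : 0 ≤ x) : x ≠ ⊥ :=
  fun hbot => by simp [hbot] at hx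

lemma SC.comp_norm (hSC : SC h μ) (hμ : 0 < μ) : SC (fun X : F => h ‖X‖) μ := by
  constructor
  case proper => exact ⟨0, by rw [norm_zero, hSC.zero]; exact EReal.zero_ne_top⟩
  case nobot => exact fun X => hSC.nobot _
  case lsc =>
    intro X y hy
    exact (continuous_norm.tendsto X).eventually (hSC.lsc ‖X‖ y hy)
  case even => intro X; rw [norm_neg]
  case nonneg => exact fun X => hSC.nonneg _
  case zero => rw [norm_zero, hSC.zero]
  case int_nonempty =>
    refine ⟨0, (hSC.mem_int_edom_iff).2 ?_⟩
    rw [norm_zero]; exact hSC.zero_mem_int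
  case strconv =>
    intro X Y t ht0 ht1
    rcases eq_or_lt_of_le ht0 with rfl | htpos
    · have e0 : (0:ℝ) • X + (1-(0:ℝ)) • Y = Y := by norm_num
      rw [e0]
      norm_num
    rcases eq_or_lt_of_le ht1 with rfl | htlt1
    · have e0 : (1:ℝ) • X + (1-(1:ℝ)) • Y = X := by norm_num
      rw [e0]
      norm_num
    by_cases hX : ‖X‖ ∈ edom h
    · by_cases hY : ‖Y‖ ∈ edom h
      · have hsle : ‖t • X + (1-t) • Y‖ ≤ t*‖X‖ + (1-t)*‖Y‖ := by
          calc ‖t • X + (1-t) • Y‖ ≤ ‖t • X‖ + ‖(1-t) • Y‖ := norm_add_le _ _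
          _ = t*‖X‖ + (1-t)*‖Y‖ := by
              rw [norm_smul, norm_smul, Real.norm_eq_abs, Real.norm_eq_abs,
                abs_of_nonneg ht0, abs_of_nonneg (by linarith : (0:ℝ) ≤ 1-t)]
        have hs2 : ‖t • X + (1-t) • Y‖^2
            = t*‖X‖^2 + (1-t)*‖Y‖^2 - (t*(1-t))*‖X - Y‖^2 := by
          have e1 := norm_add_sq_real (t • X) ((1-t) • Y)
          have e2 := norm_sub_sq_real X Y
          rw [real_inner_smul_left, real_inner_smul_right, norm_smul, norm_smul,
            Real.norm_eq_abs, Real.norm_eq_abs, abs_of_nonneg ht0,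
            abs_of_nonneg (by linarith : (0:ℝ) ≤ 1-t)] at e1
          linear_combination e1 + (t*(1-t)) * e2
        obtain ⟨hsdom, hineq⟩ := hSC.key_ineq hX hY (norm_nonneg X) (norm_nonneg Y)
          (norm_nonneg _) ht0 ht1 hsle hs2
        rw [hSC.coeH hsdom, hSC.coeH hX, hSC.coeH hY, ← EReal.coe_mul, ← EReal.coe_mul,
          ← EReal.coe_add, ← EReal.coe_sub, EReal.coe_le_coe_iff]
        exact hineq
      · have htop : h ‖Y‖ = ⊤ := not_not.1 hY
        have h1 : ((1-t:ℝ):EReal) * h ‖Y‖ = ⊤ := by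
          rw [htop]; exact EReal.coe_mul_top_of_pos (by linarith)
        have h2 : (t:EReal) * h ‖X‖ ≠ ⊥ :=
          ereal_nonneg_ne_bot (mul_nonneg (by exact_mod_cast ht0) (hSC.nonneg _))
        rw [h1, EReal.add_top_of_ne_bot h2, EReal.top_sub_coe]
        exact le_top
    · have htop : h ‖X‖ = ⊤ := not_not.1 hX
      have h1 : (t:EReal) * h ‖X‖ = ⊤ := by
        rw [htop]; exact EReal.coe_mul_top_of_pos htpos
      have h2 : ((1-t:ℝ):EReal) * h ‖Y‖ ≠ ⊥ :=
        ereal_nonneg_ne_bot (mul_nonneg (by exact_mod_cast (by linarith : (0:ℝ) ≤ 1-t))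
          (hSC.nonneg _))
      rw [h1, EReal.top_add_of_ne_bot h2, EReal.top_sub_coe]
      exact le_top
  case smooth =>
    classical
    obtain ⟨d, hgrad, hcont, hblow⟩ := hSC.smooth
    have hd' : ∀ t ∈ interior (edom h), HasDerivAt (fun r => (h r).toReal) (d t) t :=
      fun t ht => (hgrad t ht).hasDerivAt'
    have hd0mem : (0:ℝ) ∈ interior (edom h) := hSC.zero_mem_int
    have hd0 : d 0 = 0 := by
      have h1 : HasDerivAt (fun r => (h r).toReal) (d 0) 0 := hd' 0 hd0mem
      have h1' : HasDerivAt (fun r => (h r).toReal) (d 0) (-0) := by rwa [neg_zero]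
      have h2 : HasDerivAt (fun r : ℝ => (h (-r)).toReal) (d 0 * (-1)) 0 :=
        HasDerivAt.comp (0:ℝ) h1' (hasDerivAt_neg (0:ℝ))
      have h3 : (fun r : ℝ => (h (-r)).toReal) = fun r => (h r).toReal :=
        funext fun r => by rw [hSC.even]
      rw [h3] at h2
      have := h2.unique h1
      linarith [this]
    refine ⟨fun X => (d ‖X‖ / ‖X‖) • X, ?_, ?_, ?_⟩
    · intro X hX
      rcases eq_or_ne X 0 with rfl | hX0
      · show HasGradientAt (fun z : F => (h ‖z‖).toReal) ((d ‖(0:F)‖ / ‖(0:F)‖) • (0:F)) 0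
        rw [smul_zero]
        refine hasGradientAt_comp_norm_zero (F := F) (f := fun r => (h r).toReal) ?_
        have h1 := hd' 0 hd0mem
        rwa [hd0] at h1
      · exact hasGradientAt_comp_norm hX0 (hd' ‖X‖ ((hSC.mem_int_edom_iff).1 hX))
    · intro X hX
      have hXint : ‖X‖ ∈ interior (edom h) := (hSC.mem_int_edom_iff).1 hX
      have hnormmaps : ∀ Z : F, Z ∈ interior (edom (fun W : F => h ‖W‖)) →
          ‖Z‖ ∈ interior (edom h) := fun Z hZ => (hSC.mem_int_edom_iff).1 hZ
      have hnormtend : Filter.Tendsto (fun Z : F => ‖Z‖)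
          (𝓝[interior (edom (fun W : F => h ‖W‖))] X) (𝓝[interior (edom h)] ‖X‖) := by
        rw [tendsto_nhdsWithin_iff]
        constructor
        · exact ((continuous_norm.tendsto X)).mono_left nhdsWithin_le_nhds
        · exact Filter.eventually_of_mem self_mem_nhdsWithin hnormmaps
      have hdcomp : Filter.Tendsto (fun Z : F => d ‖Z‖)
          (𝓝[interior (edom (fun W : F => h ‖W‖))] X) (𝓝 (d ‖X‖)) :=
        (hcont ‖X‖ hXint).tendsto.comp hnormtend
      rcases eq_or_ne X 0 with rfl | hX0
      · have h9 : ((fun X : F => (d ‖X‖ / ‖X‖) • X) 0) = (0:F) := smul_zero _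
        unfold ContinuousWithinAt
        rw [h9]
        have hbound : ∀ Z : F, ‖(d ‖Z‖ / ‖Z‖) • Z‖ ≤ |d ‖Z‖| := by
          intro Z
          rcases eq_or_ne Z 0 with rfl | hZ0
          · rw [smul_zero, norm_zero]; exact abs_nonneg _
          · rw [norm_smul, Real.norm_eq_abs, abs_div, abs_of_nonneg (norm_nonneg Z),
              div_mul_cancel₀ _ (norm_pos_iff.2 hZ0).ne']
        have hdz : Filter.Tendsto (fun Z : F => |d ‖Z‖|)
            (𝓝[interior (edom (fun W : F => h ‖W‖))] (0:F)) (𝓝 0) := by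
          have h8 : Filter.Tendsto (fun Z : F => d ‖Z‖)
              (𝓝[interior (edom (fun W : F => h ‖W‖))] (0:F)) (𝓝 0) := by
            have := hdcomp
            rwa [norm_zero, hd0] at this
          have habs := (continuous_abs.tendsto (0:ℝ)).comp h8
          rwa [abs_zero] at habs
        exact squeeze_zero_norm hbound hdz
      · apply ContinuousWithinAt.smul
        · apply ContinuousWithinAt.div
          · exact hdcomp
          · exact (continuous_norm.continuousAt).continuousWithinAt
          · exact (norm_pos_iff.2 hX0).ne'
        · exact continuousWithinAt_id
    · intro Xs b hXs hb hTend
      have hts : ∀ k, ‖Xs k‖ ∈ interior (edom h) :=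
        fun k => (hSC.mem_int_edom_iff).1 (hXs k)
      have hbf : ‖b‖ ∈ frontier (edom h) := by
        constructor
        · have hmaps : Set.MapsTo (fun Z : F => ‖Z‖) (edom (fun W : F => h ‖W‖)) (edom h) :=
            fun Z hZ => hZ
          exact hmaps.closure continuous_norm hb.1
        · intro hcon
          exact hb.2 ((hSC.mem_int_edom_iff (X := b)).2 hcon)
      have hTend' : Filter.Tendsto (fun k => ‖Xs k‖) Filter.atTop (𝓝 ‖b‖) :=
        (continuous_norm.tendsto b).comp hTend
      have hblow' := hblow (fun k => ‖Xs k‖) ‖b‖ hts hbf hTend'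
      have heq : (fun k => ‖(d ‖Xs k‖ / ‖Xs k‖) • Xs k‖) = fun k => ‖d ‖Xs k‖‖ := by
        funext k
        rcases eq_or_ne (Xs k) 0 with hzero | hZ0
        · simp [hzero, hd0]
        · rw [norm_smul, Real.norm_eq_abs, abs_div, abs_of_nonneg (norm_nonneg _),
            div_mul_cancel₀ _ (norm_pos_iff.2 hZ0).ne', Real.norm_eq_abs]
      show Filter.Tendsto (fun k => ‖(d ‖Xs k‖ / ‖Xs k‖) • Xs k‖) Filter.atTop Filter.atTop
      rw [heq]
      exact hblow'

end Aux5
section Aux6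

variable {h : ℝ → EReal} {μ : ℝ}
variable {F : Type*} [NormedAddCommGroup F] [InnerProductSpace ℝ F] [FiniteDimensional ℝ F]

lemma SC.econj_comp_norm (hSC : SC h μ) (Y : F) :
    econj (fun X : F => h ‖X‖) Y = econj h ‖Y‖ := by
  apply le_antisymm
  · apply iSup_le
    intro X
    have h1 : ((⟪Y, X⟫ : ℝ) : EReal) - h ‖X‖ ≤ ((‖Y‖*‖X‖ : ℝ):EReal) - h ‖X‖ :=
      EReal.sub_le_sub (EReal.coe_le_coe_iff.2 (real_inner_le_norm Y X)) le_rfl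
    refine h1.trans ?_
    have h2 := le_iSup (fun t : ℝ => ((⟪‖Y‖, t⟫ : ℝ):EReal) - h t) ‖X‖
    rw [inner_real_mul] at h2
    exact h2
  · apply iSup_le
    intro t
    have habs : h t = h |t| := by
      rcases abs_cases t with ⟨he, _⟩ | ⟨he, _⟩
      · rw [he]
      · rw [he, hSC.even]
    by_cases hY0 : Y = 0
    · subst hY0
      rw [inner_real_mul, norm_zero, zero_mul]
      have h3 : ((0:ℝ):EReal) - h t ≤ ((0:ℝ):EReal) - 0 :=
        EReal.sub_le_sub le_rfl (hSC.nonneg t)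
      refine h3.trans ?_
      have h4 := le_iSup (fun X : F => ((⟪(0:F), X⟫ : ℝ):EReal) - h ‖X‖) (0:F)
      rw [inner_zero_left, norm_zero, hSC.zero] at h4
      exact h4
    · have hYpos : (0:ℝ) < ‖Y‖ := norm_pos_iff.2 hY0
      set X : F := (|t|/‖Y‖) • Y with hXdef
      have hXnorm : ‖X‖ = |t| := by
        rw [hXdef, norm_smul, Real.norm_eq_abs, abs_div, abs_abs,
          abs_of_nonneg (norm_nonneg Y), div_mul_cancel₀ _ hYpos.ne']
      have hinner : ⟪Y, X⟫ = ‖Y‖ * |t| := by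
        rw [hXdef, real_inner_smul_right, real_inner_self_eq_norm_mul_norm]
        field_simp
      rw [inner_real_mul, habs]
      have h3 : ((‖Y‖*t:ℝ):EReal) - h |t| ≤ ((‖Y‖*|t|:ℝ):EReal) - h |t| :=
        EReal.sub_le_sub (EReal.coe_le_coe_iff.2
          (mul_le_mul_of_nonneg_left (le_abs_self t) (norm_nonneg Y))) le_rfl
      refine h3.trans ?_
      have h4 := le_iSup (fun W : F => ((⟪Y, W⟫ : ℝ):EReal) - h ‖W‖) X
      rw [hinner, hXnorm] at h4
      exact h4

lemma SC.realConj_comp_norm (hSC : SC h μ) (Z : F) :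
    realConj (fun X : F => h ‖X‖) Z = realConj h ‖Z‖ := by
  rw [realConj, realConj, hSC.econj_comp_norm Z]

end Aux6
/-- If `h : ℝ → (-∞,∞]` satisfies Assumption (SC) with parameter `μ > 0`, then
the spectral isotropic function `Φ_iso(X) = h(‖σ(X)‖₂) = h(‖X‖_F)` satisfies Assumption (SC),
and `∇Φ_iso*(Y) = (h*)'(‖Y‖_F) · Y/‖Y‖_F` for `Y ≠ 0`. -/
theorem spectral_isotropic_SC_conj_gradient {m n : ℕ} (μ : ℝ) (hμ : 0 < μ)
    (h : ℝ → EReal) (hSC : SC h μ) :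
    (∃ μ' : ℝ, 0 < μ' ∧ SC (fun X : Matrix (Fin m) (Fin n) ℝ => h ‖X‖) μ') ∧
    ∀ Y : Matrix (Fin m) (Fin n) ℝ, Y ≠ 0 →
      HasGradientAt (fun Z : Matrix (Fin m) (Fin n) ℝ =>
          realConj (fun X : Matrix (Fin m) (Fin n) ℝ => h ‖X‖) Z)
        ((deriv (fun t : ℝ => realConj h t) ‖Y‖ / ‖Y‖) • Y) Y := by
  constructor
  · exact ⟨μ, hμ, hSC.comp_norm hμ⟩
  · intro Y hY
    have hfun : (fun Z : Matrix (Fin m) (Fin n) ℝ =>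
        realConj (fun X : Matrix (Fin m) (Fin n) ℝ => h ‖X‖) Z)
        = fun Z : Matrix (Fin m) (Fin n) ℝ => realConj h ‖Z‖ :=
      funext fun Z => hSC.realConj_comp_norm Z
    rw [hfun]
    exact hasGradientAt_comp_norm hY (hSC.differentiableAt_realConj hμ ‖Y‖).hasDerivAt

end
end

section
/- Let d ∈ ℝⁿ with d ≠ 0, let ε > 0 and κ ≥ 1, and set z = d/‖d‖₂. Then Σ_{i=1}^{n} d_i · z_i / (ε^κ + |z_i|^κ)^{1/κ} ≥ ‖d‖₂ / (1 + ε). -/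
/-!
Write `z = d / ‖d‖`. Every `|zᵢ| ≤ 1`, so the `ℓ^κ`-norm bound
`(ε^κ + |zᵢ|^κ)^{1/κ} ≤ ε + |zᵢ| ≤ 1 + ε` caps each denominator. Since `dᵢ zᵢ ≥ 0`, the sum is
termwise at least `Σ dᵢ zᵢ / (1 + ε) = ‖d‖ / (1 + ε)`.
-/

noncomputable def nonlinPrecond (ε κ y : ℝ) : ℝ := y / (ε ^ κ + |y| ^ κ) ^ (1 / κ)

lemma nonlinPrecond_denom_le_one_add {ε κ y : ℝ} (hε : 0 ≤ ε) (hκ : 1 ≤ κ) (hy : |y| ≤ 1) :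
    (ε ^ κ + |y| ^ κ) ^ (1 / κ) ≤ 1 + ε := by
  linarith [Real.rpow_add_rpow_le_add hε (abs_nonneg y) hκ]

lemma mul_div_one_add_le_mul_nonlinPrecond {ε κ a y : ℝ} (hε : 0 < ε) (hκ : 1 ≤ κ)
    (hy : |y| ≤ 1) (hay : 0 ≤ a * y) :
    a * y / (1 + ε) ≤ a * nonlinPrecond ε κ y := by
  rw [nonlinPrecond, ← mul_div_assoc]
  exact div_le_div_of_nonneg_left hay (by positivity)
    (nonlinPrecond_denom_le_one_add hε.le hκ hy)

lemma EuclideanSpace.sum_mul_self_eq_norm_sq {ι : Type*} [Fintype ι] (x : EuclideanSpace ℝ ι) :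
    ∑ i, x i * x i = ‖x‖ ^ 2 := by
  rw [← real_inner_self_eq_norm_sq, PiLp.inner_apply]
  simp [sq]

lemma abs_apply_div_norm_le_one {ι : Type*} [Fintype ι] (x : EuclideanSpace ℝ ι) (i : ι) :
    |x i / ‖x‖| ≤ 1 := by
  rw [abs_div, abs_norm]
  exact div_le_one_of_le₀ (PiLp.norm_apply_le x i) (norm_nonneg x)

/-- For `d ≠ 0` in `ℝⁿ`, `ε > 0`, `κ ≥ 1` and `z = d/‖d‖₂`, the inner product
`⟨d, ∇φ*(z)⟩ = Σᵢ dᵢ · zᵢ/(ε^κ + |zᵢ|^κ)^{1/κ}` is at least `‖d‖₂/(1+ε)`. -/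
theorem spectral_precond_lower_bound {n : ℕ} (d : EuclideanSpace ℝ (Fin n)) (hd : d ≠ 0)
    (ε κ : ℝ) (hε : 0 < ε) (hκ : 1 ≤ κ) :
    ‖d‖ / (1 + ε) ≤
      ∑ i : Fin n, d i * ((d i / ‖d‖) / (ε ^ κ + |d i / ‖d‖| ^ κ) ^ (1 / κ)) := by
  have hd_pos : 0 < ‖d‖ := norm_pos_iff.mpr hd
  have h_inner : ∑ i, d i * (d i / ‖d‖) = ‖d‖ := by
    simp_rw [← mul_div_assoc, ← Finset.sum_div, EuclideanSpace.sum_mul_self_eq_norm_sq]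
    field_simp
  calc ‖d‖ / (1 + ε) = ∑ i, d i * (d i / ‖d‖) / (1 + ε) := by rw [← Finset.sum_div, h_inner]
    _ ≤ ∑ i, d i * nonlinPrecond ε κ (d i / ‖d‖) := by
      gcongr with i
      refine mul_div_one_add_le_mul_nonlinPrecond hε hκ (abs_apply_div_norm_le_one d i) ?_
      rw [← mul_div_assoc]
      exact div_nonneg (mul_self_nonneg _) (norm_nonneg d)
end

section
/- Let A ∈ ℝ^{m×n} with A ≠ 0, let ε > 0 and κ ≥ 1, let q = min(m,n), and let s₁, …, s_q be the singular values of A. Then Σ_{i=1}^{q} s_i · (s_i/‖A‖_F) / (ε^κ + (s_i/‖A‖_F)^κ)^{1/κ} ≥ ‖A‖_F / (1 + ε). Equivalently, ⟨A, ∇Φ*(A/‖A‖_F)⟩ ≥ ‖A‖_F/(1+ε), where ∇Φ*(Y) = U Diag(t₁/(ε^κ + t_i^κ)^{1/κ}, …) Vᵀ for a singular value decomposition Y = U Diag(t) Vᵀ. -/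
open Matrix
open scoped BigOperators

/-- Frobenius norm `‖A‖_F = sqrt (Σᵢⱼ Aᵢⱼ²)`. -/
noncomputable def frobNorm {m n : ℕ} (A : Matrix (Fin m) (Fin n) ℝ) : ℝ :=
  Real.sqrt (∑ i, ∑ j, A i j ^ 2)

open scoped NNReal

lemma my_rpow_mean_le {ε x κ : ℝ} (hε : 0 ≤ ε) (hx : 0 ≤ x) (hκ : 1 ≤ κ) :
    (ε ^ κ + x ^ κ) ^ (1 / κ) ≤ ε + x := by
  have h := NNReal.rpow_add_rpow_le_add ε.toNNReal x.toNNReal hκ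
  have h' : (((ε.toNNReal ^ κ + x.toNNReal ^ κ) ^ (1/κ) : ℝ≥0) : ℝ)
      ≤ ((ε.toNNReal + x.toNNReal : ℝ≥0) : ℝ) := by exact_mod_cast h
  rw [NNReal.coe_rpow, NNReal.coe_add, NNReal.coe_rpow, NNReal.coe_rpow,
    Real.coe_toNNReal _ hε, Real.coe_toNNReal _ hx, NNReal.coe_add,
    Real.coe_toNNReal _ hε, Real.coe_toNNReal _ hx] at h'
  exact h'

lemma my_scalar_key {ε κ x : ℝ} (hε : 0 < ε) (hκ : 1 ≤ κ) (hx0 : 0 ≤ x) (hx1 : x ≤ 1) :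
    x * x / (1 + ε) ≤ x * (x / (ε ^ κ + x ^ κ) ^ (1 / κ)) := by
  have hbase : 0 < ε ^ κ + x ^ κ :=
    add_pos_of_pos_of_nonneg (Real.rpow_pos_of_pos hε κ) (Real.rpow_nonneg hx0 κ)
  have hd : 0 < (ε ^ κ + x ^ κ) ^ (1 / κ) := Real.rpow_pos_of_pos hbase _
  have hle : (ε ^ κ + x ^ κ) ^ (1 / κ) ≤ 1 + ε := by
    have := my_rpow_mean_le hε.le hx0 hκ; linarith
  have h1 : x / (1 + ε) ≤ x / (ε ^ κ + x ^ κ) ^ (1 / κ) :=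
    div_le_div_of_nonneg_left hx0 hd hle
  calc x * x / (1 + ε) = x * (x / (1 + ε)) := by ring
    _ ≤ x * (x / (ε ^ κ + x ^ κ) ^ (1 / κ)) := mul_le_mul_of_nonneg_left h1 hx0

lemma my_sum_key {k : ℕ} {ε κ : ℝ} (hε : 0 < ε) (hκ : 1 ≤ κ) (t : Fin k → ℝ)
    (ht : ∀ i, 0 ≤ t i) (hsum : ∑ i, t i * t i = 1) :
    1 / (1 + ε) ≤ ∑ i, t i * (t i / (ε ^ κ + t i ^ κ) ^ (1 / κ)) := by
  have h1 : ∀ i, t i ≤ 1 := by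
    intro i
    have h2 : t i * t i ≤ 1 := by
      rw [← hsum]
      exact Finset.single_le_sum (fun j _ => mul_nonneg (ht j) (ht j)) (Finset.mem_univ i)
    nlinarith [ht i]
  calc 1 / (1 + ε) = ∑ i, t i * t i / (1 + ε) := by rw [← Finset.sum_div, hsum]
    _ ≤ _ := Finset.sum_le_sum fun i _ => my_scalar_key hε hκ (ht i) (h1 i)

lemma my_top_sum {n k : ℕ} (hk : k ≤ n) (ev : Fin n → ℝ) (h0 : ∀ i, 0 ≤ ev i)
    (hcard : Fintype.card {i // ev i ≠ 0} ≤ k) :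
    ∑ i : Fin k, ev (Tuple.sort ev ((Fin.castLE hk i).rev)) = ∑ i, ev i := by
  classical
  set σ := Tuple.sort ev with hσ
  have hmono : Monotone (ev ∘ σ) := Tuple.monotone_sort ev
  have hzero : ∀ j : Fin n, (j : ℕ) < n - k → ev (σ j) = 0 := by
    intro j hj
    by_contra hne
    have hpos : 0 < ev (σ j) := lt_of_le_of_ne (h0 _) (Ne.symm hne)
    have hsub : Finset.Ici j ⊆ Finset.univ.filter (fun i => ev (σ i) ≠ 0) := by
      intro x hx
      simp only [Finset.mem_filter, Finset.mem_univ, true_and]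
      have : ev (σ j) ≤ ev (σ x) := hmono (Finset.mem_Ici.mp hx)
      exact ne_of_gt (lt_of_lt_of_le hpos this)
    have hc2 : (Finset.univ.filter (fun i => ev (σ i) ≠ 0)).card
        = (Finset.univ.filter (fun i => ev i ≠ 0)).card := by
      apply Finset.card_bij (fun i _ => σ i)
      · intro a ha; simp only [Finset.mem_filter, Finset.mem_univ, true_and] at ha ⊢; exact ha
      · intro a _ b _ hab; exact σ.injective hab
      · intro b hb
        refine ⟨σ.symm b, ?_, by simp⟩
        simp only [Finset.mem_filter, Finset.mem_univ, true_and] at hb ⊢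
        simpa using hb
    have hc3 : (Finset.univ.filter (fun i => ev i ≠ 0)).card ≤ k := by
      rwa [← Fintype.card_subtype]
    have hIci : (Finset.Ici j).card = n - (j : ℕ) := Fin.card_Ici j
    have := Finset.card_le_card hsub
    rw [hIci, hc2] at this
    omega
  have hinj : Function.Injective (fun i : Fin k => (Fin.castLE hk i).rev) :=
    Fin.rev_injective.comp (Fin.castLE_injective hk)
  have hmap : ∑ j ∈ Finset.univ.map ⟨_, hinj⟩, ev (σ j)
      = ∑ i : Fin k, ev (σ ((Fin.castLE hk i).rev)) := Finset.sum_map _ _ _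
  have hcover : ∑ j : Fin n, ev (σ j) = ∑ j ∈ Finset.univ.map ⟨_, hinj⟩, ev (σ j) := by
    symm
    apply Finset.sum_subset (Finset.subset_univ _)
    intro j _ hj
    apply hzero
    by_contra hlt
    push_neg at hlt
    apply hj
    simp only [Finset.mem_map, Finset.mem_univ, true_and, Function.Embedding.coeFn_mk]
    have hjn : (j : ℕ) < n := j.isLt
    refine ⟨⟨n - 1 - (j : ℕ), by omega⟩, ?_⟩
    apply Fin.ext
    rw [Fin.val_rev]
    simp only [Fin.coe_castLE]
    omega
  rw [← hmap, ← hcover]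
  exact Equiv.sum_comp σ ev

lemma my_trace_transpose_mul {m n : ℕ} (A : Matrix (Fin m) (Fin n) ℝ) :
    Matrix.trace (Aᵀ * A) = ∑ i, ∑ j, A i j ^ 2 := by
  rw [Matrix.trace]
  simp only [Matrix.diag, Matrix.mul_apply, Matrix.transpose_apply]
  rw [Finset.sum_comm]
  simp [pow_two]

lemma my_conjT {m n : ℕ} (A : Matrix (Fin m) (Fin n) ℝ) : Aᴴ = Aᵀ := by
  ext i j; simp [Matrix.conjTranspose_apply]

lemma my_trace_diagRect_mul {m n : ℕ} (t u : Fin (min m n) → ℝ) :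
    Matrix.trace ((diagRect t)ᵀ * diagRect u) = ∑ i, t i * u i := by
  classical
  have hinner : ∀ j : Fin n, (∑ i : Fin m, diagRect t i j * diagRect u i j)
      = if h : (j : ℕ) < min m n then t ⟨j, h⟩ * u ⟨j, h⟩ else 0 := by
    intro j
    by_cases h : (j : ℕ) < min m n
    · rw [dif_pos h]
      have hjm : (j : ℕ) < m := lt_of_lt_of_le h (min_le_left m n)
      rw [Finset.sum_eq_single (⟨(j : ℕ), hjm⟩ : Fin m)]
      · simp [diagRect, h]
      · intro b _ hb
        have hbj : ¬((b : ℕ) = (j : ℕ) ∧ (b : ℕ) < min m n) := by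
          rintro ⟨h1, _⟩; exact hb (Fin.ext h1)
        show diagRect t b j * diagRect u b j = 0
        unfold diagRect
        rw [dif_neg hbj, zero_mul]
      · simp
    · rw [dif_neg h]
      apply Finset.sum_eq_zero
      intro i _
      have hij : ¬((i : ℕ) = (j : ℕ) ∧ (i : ℕ) < min m n) := by
        rintro ⟨h1, h2⟩; exact h (h1 ▸ h2)
      show diagRect t i j * diagRect u i j = 0
      unfold diagRect
      rw [dif_neg hij, zero_mul]
  have htr : Matrix.trace ((diagRect t)ᵀ * diagRect u)
      = ∑ j : Fin n, ∑ i : Fin m, diagRect t i j * diagRect u i j := by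
    simp [Matrix.trace, Matrix.diag, Matrix.mul_apply]
  rw [htr, Finset.sum_congr rfl fun j _ => hinner j]
  have hinj : Function.Injective (Fin.castLE (min_le_right m n)) :=
    Fin.castLE_injective _
  have hcover : ∑ j : Fin n,
        (if h : (j : ℕ) < min m n then t ⟨j, h⟩ * u ⟨j, h⟩ else 0)
      = ∑ j ∈ Finset.univ.map ⟨_, hinj⟩,
        (if h : (j : ℕ) < min m n then t ⟨j, h⟩ * u ⟨j, h⟩ else 0) := by
    symm
    apply Finset.sum_subset (Finset.subset_univ _)
    intro j _ hj
    rw [dif_neg]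
    intro hlt
    apply hj
    simp only [Finset.mem_map, Finset.mem_univ, true_and, Function.Embedding.coeFn_mk]
    exact ⟨⟨(j : ℕ), hlt⟩, Fin.ext rfl⟩
  rw [hcover, Finset.sum_map]
  apply Finset.sum_congr rfl
  intro i _
  simp only [Function.Embedding.coeFn_mk, Fin.coe_castLE, Fin.is_lt, dif_pos, Fin.eta]

lemma my_trace_conj {m n : ℕ} {U : Matrix (Fin m) (Fin m) ℝ} {V : Matrix (Fin n) (Fin n) ℝ}
    (hU : IsOrth U) (hV : IsOrth V) (D E : Matrix (Fin m) (Fin n) ℝ) :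
    Matrix.trace ((U * D * Vᵀ)ᵀ * (U * E * Vᵀ)) = Matrix.trace (Dᵀ * E) := by
  have hmid : Uᵀ * (U * (E * Vᵀ)) = E * Vᵀ := by
    rw [← Matrix.mul_assoc, hU.1, Matrix.one_mul]
  have h1 : (U * D * Vᵀ)ᵀ * (U * E * Vᵀ) = V * (Dᵀ * E) * Vᵀ := by
    simp only [Matrix.transpose_mul, Matrix.transpose_transpose, Matrix.mul_assoc]
    rw [hmid]
  rw [h1, Matrix.trace_mul_cycle, hV.1, Matrix.one_mul]

lemma my_svals_nonneg {m n : ℕ} (A : Matrix (Fin m) (Fin n) ℝ) (i : Fin (min m n)) :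
    0 ≤ svals A i := Real.sqrt_nonneg _

lemma my_sum_sq_svals {m n : ℕ} (A : Matrix (Fin m) (Fin n) ℝ) :
    ∑ i : Fin (min m n), svals A i ^ 2 = ∑ i, ∑ j, A i j ^ 2 := by
  classical
  have hH := Matrix.isHermitian_conjTranspose_mul_self A
  set ev : Fin n → ℝ := hH.eigenvalues with hev
  have hev0 : ∀ i, 0 ≤ ev i := fun i =>
    (Matrix.posSemidef_conjTranspose_mul_self A).eigenvalues_nonneg i
  have hsq : ∀ i : Fin (min m n),
      svals A i ^ 2 = ev (Tuple.sort ev ((Fin.castLE (min_le_right m n) i).rev)) := by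
    intro i
    simp only [svals]
    exact Real.sq_sqrt (hev0 _)
  have hcard : Fintype.card {i // ev i ≠ 0} ≤ min m n := by
    rw [hev, ← hH.rank_eq_card_non_zero_eigs, Matrix.rank_conjTranspose_mul_self]
    exact le_min (Matrix.rank_le_height A) (Matrix.rank_le_width A)
  have hu : (star (hH.eigenvectorUnitary : Matrix (Fin n) (Fin n) ℝ))
      * (hH.eigenvectorUnitary : Matrix (Fin n) (Fin n) ℝ) = 1 :=
    Matrix.mem_unitaryGroup_iff'.mp hH.eigenvectorUnitary.2
  have htrace : ∑ i, ev i = Matrix.trace (Aᴴ * A) := by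
    conv_rhs => rw [hH.spectral_theorem]
    rw [Unitary.conjStarAlgAut_apply]
    rw [Matrix.trace_mul_cycle, hu, Matrix.one_mul, Matrix.trace_diagonal]
    simp [Function.comp]
    rfl
  calc ∑ i : Fin (min m n), svals A i ^ 2
      = ∑ i : Fin (min m n), ev (Tuple.sort ev ((Fin.castLE (min_le_right m n) i).rev)) :=
        Finset.sum_congr rfl fun i _ => hsq i
    _ = ∑ i, ev i := my_top_sum (min_le_right m n) ev hev0 hcard
    _ = Matrix.trace (Aᴴ * A) := htrace
    _ = ∑ i, ∑ j, A i j ^ 2 := by rw [my_conjT, my_trace_transpose_mul]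

lemma my_frob_pos {m n : ℕ} {A : Matrix (Fin m) (Fin n) ℝ} (hA : A ≠ 0) :
    0 < frobNorm A := by
  rw [frobNorm]
  apply Real.sqrt_pos.mpr
  have h1 : ∃ i j, A i j ≠ 0 := by
    by_contra h
    push_neg at h
    exact hA (by ext i j; exact h i j)
  obtain ⟨i, j, hij⟩ := h1
  have h2 : (0:ℝ) < A i j ^ 2 := by positivity
  have h3 : A i j ^ 2 ≤ ∑ j', A i j' ^ 2 :=
    Finset.single_le_sum (f := fun j' => A i j' ^ 2)
      (fun _ _ => sq_nonneg _) (Finset.mem_univ j)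
  have h4 : ∑ j', A i j' ^ 2 ≤ ∑ i', ∑ j', A i' j' ^ 2 :=
    Finset.single_le_sum (f := fun i' => ∑ j', A i' j' ^ 2)
      (fun _ _ => Finset.sum_nonneg fun _ _ => sq_nonneg _) (Finset.mem_univ i)
  linarith

lemma my_frob_sq {m n : ℕ} (A : Matrix (Fin m) (Fin n) ℝ) :
    frobNorm A ^ 2 = ∑ i, ∑ j, A i j ^ 2 := by
  rw [frobNorm]
  exact Real.sq_sqrt (Finset.sum_nonneg fun _ _ => Finset.sum_nonneg fun _ _ => sq_nonneg _)

/-- For `A ≠ 0`, `ε > 0`, `κ ≥ 1` and singular values `sᵢ` of `A`,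
`Σᵢ sᵢ·(sᵢ/‖A‖_F)/(ε^κ + (sᵢ/‖A‖_F)^κ)^{1/κ} ≥ ‖A‖_F/(1+ε)`; equivalently
`⟨A, ∇Φ*(A/‖A‖_F)⟩ ≥ ‖A‖_F/(1+ε)` where `∇Φ*(Y) = U Diag(tᵢ/(ε^κ + tᵢ^κ)^{1/κ}) Vᵀ`
for a singular value decomposition `Y = U Diag(t) Vᵀ`. -/
theorem matrix_precond_lower_bound {m n : ℕ} (A : Matrix (Fin m) (Fin n) ℝ) (hA : A ≠ 0)
    (ε κ : ℝ) (hε : 0 < ε) (hκ : 1 ≤ κ) :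
    (frobNorm A / (1 + ε) ≤
      ∑ i : Fin (min m n), svals A i *
        ((svals A i / frobNorm A) / (ε ^ κ + (svals A i / frobNorm A) ^ κ) ^ (1 / κ))) ∧
    ∀ (U : Matrix (Fin m) (Fin m) ℝ) (V : Matrix (Fin n) (Fin n) ℝ)
      (t : Fin (min m n) → ℝ), IsOrth U → IsOrth V → (∀ i, 0 ≤ t i) →
      (frobNorm A)⁻¹ • A = U * diagRect t * Vᵀ →
      frobNorm A / (1 + ε) ≤
        Matrix.trace (Aᵀ * (U * diagRect (fun i => t i / (ε ^ κ + t i ^ κ) ^ (1 / κ)) * Vᵀ)) := by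
  have hF : 0 < frobNorm A := my_frob_pos hA
  set F := frobNorm A with hFdef
  constructor
  · -- part 1
    set t : Fin (min m n) → ℝ := fun i => svals A i / F with ht
    have ht0 : ∀ i, 0 ≤ t i := fun i => div_nonneg (my_svals_nonneg A i) hF.le
    have hsum : ∑ i, t i * t i = 1 := by
      have habc : ∀ i, t i * t i = svals A i ^ 2 / F ^ 2 := by
        intro i; simp only [ht]; field_simp
      rw [Finset.sum_congr rfl fun i _ => habc i, ← Finset.sum_div,
        my_sum_sq_svals, ← my_frob_sq, div_self (by positivity)]
    have key := my_sum_key hε hκ t ht0 hsum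
    calc F / (1 + ε) = F * (1 / (1 + ε)) := by ring
      _ ≤ F * ∑ i, t i * (t i / (ε ^ κ + t i ^ κ) ^ (1 / κ)) :=
          mul_le_mul_of_nonneg_left key hF.le
      _ = ∑ i, svals A i * ((svals A i / F) / (ε ^ κ + (svals A i / F) ^ κ) ^ (1 / κ)) := by
          rw [Finset.mul_sum]
          apply Finset.sum_congr rfl
          intro i _
          simp only [ht]
          have hc : F * (svals A i / F) = svals A i := by field_simp
          rw [← mul_assoc, hc]
  · -- part 2
    intro U V t hU hV ht0 hdec
    set D := diagRect t with hD
    set E := diagRect (fun i => t i / (ε ^ κ + t i ^ κ) ^ (1 / κ)) with hE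
    have hAeq : A = F • (U * D * Vᵀ) := by
      rw [← hdec, smul_smul, mul_inv_cancel₀ hF.ne', one_smul]
    have hsum1 : ∑ i, t i * t i = 1 := by
      have e1 : Matrix.trace (Dᵀ * D) = ∑ i, t i * t i := my_trace_diagRect_mul t t
      have e2 : Matrix.trace ((U * D * Vᵀ)ᵀ * (U * D * Vᵀ)) = Matrix.trace (Dᵀ * D) :=
        my_trace_conj hU hV D D
      have e3 : Matrix.trace ((F⁻¹ • A)ᵀ * (F⁻¹ • A)) = 1 := by
        rw [Matrix.transpose_smul, Matrix.smul_mul, Matrix.mul_smul, Matrix.trace_smul,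
          Matrix.trace_smul, smul_eq_mul, smul_eq_mul, my_trace_transpose_mul, ← my_frob_sq]
        field_simp
        rw [← hFdef]
      rw [← e1, ← e2, ← hdec]
      exact e3
    have key := my_sum_key hε hκ t ht0 hsum1
    have htr : Matrix.trace (Aᵀ * (U * E * Vᵀ))
        = F * ∑ i, t i * (t i / (ε ^ κ + t i ^ κ) ^ (1 / κ)) := by
      conv_lhs => rw [hAeq]
      rw [Matrix.transpose_smul, Matrix.smul_mul, Matrix.trace_smul, smul_eq_mul,
        my_trace_conj hU hV D E, my_trace_diagRect_mul]
    rw [htr]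
    calc F / (1 + ε) = F * (1 / (1 + ε)) := by ring
      _ ≤ _ := mul_le_mul_of_nonneg_left key hF.le
end

section
/- Let d ∈ ℝⁿ, ε > 0, ε̂ > 0, and κ ≥ 1. Then Σ_{i=1}^{n} d_i · (d_i/(‖d‖₂ + ε̂)) / (ε^κ + (|d_i|/(‖d‖₂ + ε̂))^κ)^{1/κ} ≥ ‖d‖₂² / ((1+ε)‖d‖₂ + ε̂ ε). Moreover, the function r(t) = t²/((ε+1)|t| + ε̂ε) is convex and 1-Lipschitz continuous on ℝ. -/
/-!
Since `κ ≥ 1`, `(ε^κ + a^κ)^(1/κ) ≤ ε + a`, so with `N = ‖d‖ + ε̂` the `i`-th summand is at least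
`d_i² / (ε N + |d_i|) ≥ d_i² / ((1 + ε)‖d‖ + ε̂ ε)`; summing gives the bound.
The function `r` is `g ∘ |·|` with `g s = s² / (c s + b)`, which is convex and nondecreasing on
`[0, ∞)`, and `c (g s - g u) = (s - u)(1 - b² / ((c s + b)(c u + b)))` gives the Lipschitz constant
`1 / c ≤ 1`.
-/

open Set

section QuadraticOverLinear

variable {c b : ℝ}

lemma monotoneOn_sq_div_mul_add (hc : 0 ≤ c) (hb : 0 < b) :
    MonotoneOn (fun s : ℝ => s ^ 2 / (c * s + b)) (Ici 0) := by
  intro s hs t ht hst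
  simp only [mem_Ici] at hs ht
  rw [div_le_div_iff₀ (by positivity) (by positivity)]
  nlinarith [mul_nonneg (mul_nonneg (mul_nonneg hc hs) ht) (sub_nonneg.2 hst),
    mul_nonneg (mul_nonneg hb.le (sub_nonneg.2 hst)) (add_nonneg hs ht)]

lemma convexOn_sq_div_mul_add (hc : 0 ≤ c) (hb : 0 < b) :
    ConvexOn ℝ (Ici 0) (fun s : ℝ => s ^ 2 / (c * s + b)) := by
  refine ⟨convex_Ici 0, fun x hx y hy α β hα hβ hαβ => ?_⟩
  simp only [mem_Ici, smul_eq_mul] at hx hy ⊢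
  obtain rfl : β = 1 - α := by linarith
  rw [mul_div_assoc', mul_div_assoc', div_add_div _ _ (by positivity) (by positivity),
    div_le_div_iff₀ (by positivity) (by positivity)]
  nlinarith [mul_nonneg (mul_nonneg hα hβ) (sq_nonneg (x * (c * y + b) - y * (c * x + b)))]

lemma convexOn_sq_div_mul_abs_add (hc : 0 ≤ c) (hb : 0 < b) :
    ConvexOn ℝ univ (fun t : ℝ => t ^ 2 / (c * |t| + b)) := by
  have himage : (|·|) '' (univ : Set ℝ) = Ici 0 := by
    ext s
    exact ⟨fun ⟨t, _, hts⟩ => hts ▸ abs_nonneg t, fun hs => ⟨s, trivial, abs_of_nonneg hs⟩⟩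
  have hcomp := (himage ▸ convexOn_sq_div_mul_add hc hb).comp convexOn_univ_norm
    (himage ▸ monotoneOn_sq_div_mul_add hc hb)
  simpa only [Function.comp_def, Real.norm_eq_abs, sq_abs] using hcomp

lemma mul_abs_sub_sq_div_mul_add_le (hc : 0 ≤ c) (hb : 0 < b) {s u : ℝ} (hs : 0 ≤ s)
    (hu : 0 ≤ u) : c * |s ^ 2 / (c * s + b) - u ^ 2 / (c * u + b)| ≤ |s - u| := by
  have hps : 0 < c * s + b := by positivity
  have hpu : 0 < c * u + b := by positivity
  have hdiff : s ^ 2 / (c * s + b) - u ^ 2 / (c * u + b) =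
      (s - u) * (c * s * u + b * (s + u)) / ((c * s + b) * (c * u + b)) := by
    field_simp
    ring
  have hnum : 0 ≤ c * s * u + b * (s + u) := by positivity
  have hkey : c * (c * s * u + b * (s + u)) ≤ (c * s + b) * (c * u + b) := by
    nlinarith [sq_nonneg b]
  rw [hdiff, abs_div, abs_mul, abs_of_nonneg hnum, abs_of_pos (mul_pos hps hpu), ← mul_div_assoc,
    div_le_iff₀ (mul_pos hps hpu)]
  calc c * (|s - u| * (c * s * u + b * (s + u)))
      = |s - u| * (c * (c * s * u + b * (s + u))) := by ring
    _ ≤ |s - u| * ((c * s + b) * (c * u + b)) := by gcongr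

lemma lipschitzWith_sq_div_mul_abs_add (hc : 0 < c) (hb : 0 < b) :
    LipschitzWith (Real.toNNReal c⁻¹) (fun t : ℝ => t ^ 2 / (c * |t| + b)) := by
  refine LipschitzWith.of_dist_le_mul fun x y => ?_
  rw [Real.coe_toNNReal _ (inv_nonneg.2 hc.le), Real.dist_eq, Real.dist_eq, ← div_eq_inv_mul,
    le_div_iff₀' hc, ← sq_abs x, ← sq_abs y]
  exact (mul_abs_sub_sq_div_mul_add_le hc.le hb (abs_nonneg x) (abs_nonneg y)).trans
    (abs_abs_sub_abs_le_abs_sub x y)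

end QuadraticOverLinear

lemma mul_rpow_add_rpow_div_le {ε a N κ : ℝ} (hε : 0 ≤ ε) (ha : 0 ≤ a) (hN : 0 < N)
    (hκ : 1 ≤ κ) : N * (ε ^ κ + (a / N) ^ κ) ^ (1 / κ) ≤ ε * N + a := by
  calc N * (ε ^ κ + (a / N) ^ κ) ^ (1 / κ)
      ≤ N * (ε + a / N) := by
        gcongr
        exact Real.rpow_add_rpow_le_add hε (by positivity) hκ
    _ = ε * N + a := by field_simp

lemma sq_div_le_mul_div_rpow_add_rpow {x ε N M κ : ℝ} (hε : 0 < ε) (hN : 0 < N) (hκ : 1 ≤ κ)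
    (hM : ε * N + |x| ≤ M) :
    x ^ 2 / M ≤ x * ((x / N) / (ε ^ κ + (|x| / N) ^ κ) ^ (1 / κ)) := by
  have hD : 0 < (ε ^ κ + (|x| / N) ^ κ) ^ (1 / κ) := by positivity
  calc x ^ 2 / M
      ≤ x ^ 2 / (N * (ε ^ κ + (|x| / N) ^ κ) ^ (1 / κ)) :=
        div_le_div_of_nonneg_left (sq_nonneg x) (by positivity)
          ((mul_rpow_add_rpow_div_le hε.le (abs_nonneg x) hN hκ).trans hM)
    _ = x * ((x / N) / (ε ^ κ + (|x| / N) ^ κ) ^ (1 / κ)) := by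
        field_simp

/-- Lower bound for the pre-normalized nonlinear preconditioner
`⟨d, ∇φ*(d/(‖d‖+ε̂))⟩ ≥ ‖d‖²/((1+ε)‖d‖ + ε̂ε)`, together with convexity and `1`-Lipschitz
continuity of `r(t) = t²/((ε+1)|t| + ε̂ε)`. -/
theorem prenormalized_precond_bound {n : ℕ} (d : EuclideanSpace ℝ (Fin n))
    (ε εhat κ : ℝ) (hε : 0 < ε) (hεhat : 0 < εhat) (hκ : 1 ≤ κ) :
    (‖d‖ ^ 2 / ((1 + ε) * ‖d‖ + εhat * ε) ≤
      ∑ i : Fin n, d i * ((d i / (‖d‖ + εhat)) /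
        (ε ^ κ + (|d i| / (‖d‖ + εhat)) ^ κ) ^ (1 / κ))) ∧
    ConvexOn ℝ Set.univ (fun t : ℝ => t ^ 2 / ((ε + 1) * |t| + εhat * ε)) ∧
    LipschitzWith 1 (fun t : ℝ => t ^ 2 / ((ε + 1) * |t| + εhat * ε)) := by
  have hb : 0 < εhat * ε := by positivity
  refine ⟨?_, convexOn_sq_div_mul_abs_add (by positivity) hb,
    (lipschitzWith_sq_div_mul_abs_add (by positivity) hb).weaken ?_⟩
  · rw [EuclideanSpace.real_norm_sq_eq, Finset.sum_div]
    refine Finset.sum_le_sum fun i _ => sq_div_le_mul_div_rpow_add_rpow hε (by positivity) hκ ?_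
    have hdi : |d i| ≤ ‖d‖ := by simpa only [Real.norm_eq_abs] using PiLp.norm_apply_le d i
    linarith
  · exact Real.toNNReal_le_one.2 (inv_le_one_of_one_le₀ (by linarith))
end
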